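/- arXiv:1601.03172 — 5 statements merged into one kernel-verified Lean document; each statement's English description precedes it below -/
import Mathlib

section
/- Let 1 ≤ q < ∞ with q ≠ N, where N ≥ 1 is an integer. Then for every u ∈ C₀^∞(ℝ^N \ {0}), ∫_{ℝ^N} |u(x)|^q / |x|^q dx ≤ (q/|N-q|)^q ∫_{ℝ^N} |∇u(x)|^q dx. -/
open Real MeasureTheory

open Set ENNReal

lemma lint_Ioc_rpow {e : ℝ} (he : -1 < e) {r : ℝ} (hr : 0 ≤ r) :
    ∫⁻ s in Set.Ioc (0:ℝ) r, ENNReal.ofReal (s ^ e) = ENNReal.ofReal (r ^ (e+1) / (e+1)) := by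
  rw [← ofReal_integral_eq_lintegral_ofReal ((intervalIntegral.intervalIntegrable_rpow' he).1)
      (by filter_upwards [ae_restrict_mem measurableSet_Ioc] with y hy
          exact Real.rpow_nonneg hy.1.le _)]
  congr 1
  rw [← intervalIntegral.integral_of_le hr, integral_rpow (Or.inl he)]
  rw [Real.zero_rpow (by linarith : e+1 ≠ 0), sub_zero]

lemma lint_Ioi_rpow {e : ℝ} (he : e < -1) {s : ℝ} (hs : 0 < s) :
    ∫⁻ r in Set.Ioi s, ENNReal.ofReal (r ^ e) = ENNReal.ofReal (s ^ (e+1) / (-e-1)) := by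
  rw [← ofReal_integral_eq_lintegral_ofReal (integrableOn_Ioi_rpow_of_lt he hs)
      (by filter_upwards [ae_restrict_mem measurableSet_Ioi] with y hy
          exact Real.rpow_nonneg (le_of_lt (lt_trans hs hy)) _)]
  rw [integral_Ioi_rpow_of_lt he hs]
  congr 1
  have h2 : -e - 1 ≠ 0 := by linarith
  have h3 : e + 1 ≠ 0 := by linarith
  field_simp
  ring

lemma measurable_core {d : ℝ} (G : ℝ → ℝ≥0∞) (hG : Measurable G) :
    Measurable (fun p : ℝ × ℝ => ENNReal.ofReal (p.1 ^ d) * G p.2) :=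
  ((measurable_fst.pow_const d).ennreal_ofReal).mul (hG.comp measurable_snd)

lemma swap_A {d : ℝ} (hd : d < -1) (G : ℝ → ℝ≥0∞) (hG : Measurable G) :
    ∫⁻ r in Ioi (0:ℝ), ENNReal.ofReal (r ^ d) * ∫⁻ s in Ioc (0:ℝ) r, G s
      = ENNReal.ofReal (1/(-d-1)) * ∫⁻ s in Ioi (0:ℝ), ENNReal.ofReal (s ^ (d+1)) * G s := by
  set S : Set (ℝ × ℝ) := {p : ℝ × ℝ | p.2 ≤ p.1} with hS
  have hSm : MeasurableSet S := measurableSet_le measurable_snd measurable_fst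
  set g : ℝ × ℝ → ℝ≥0∞ := fun p => ENNReal.ofReal (p.1 ^ d) * G p.2 with hg
  have hgm : Measurable (S.indicator g) := (measurable_core G hG).indicator hSm
  calc ∫⁻ r in Ioi (0:ℝ), ENNReal.ofReal (r ^ d) * ∫⁻ s in Ioc (0:ℝ) r, G s
      = ∫⁻ r in Ioi (0:ℝ), ∫⁻ s in Ioi (0:ℝ), S.indicator g (r, s) := by
        refine setLIntegral_congr_fun measurableSet_Ioi (fun r hr => ?_)
        have : ∀ s : ℝ, S.indicator g (r, s)
            = (Iic r).indicator (fun s => ENNReal.ofReal (r ^ d) * G s) s := by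
          intro s
          by_cases h : s ≤ r <;> simp [Set.indicator, hS, hg, h]
        simp_rw [this]
        rw [lintegral_indicator measurableSet_Iic, Measure.restrict_restrict measurableSet_Iic,
          Set.Iic_inter_Ioi, lintegral_const_mul' _ _ ENNReal.ofReal_ne_top]
    _ = ∫⁻ s in Ioi (0:ℝ), ∫⁻ r in Ioi (0:ℝ), S.indicator g (r, s) := by
        exact lintegral_lintegral_swap hgm.aemeasurable
    _ = ∫⁻ s in Ioi (0:ℝ), ENNReal.ofReal (s ^ (d+1) / (-d-1)) * G s := by
        refine setLIntegral_congr_fun measurableSet_Ioi (fun s hs => ?_)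
        have : ∀ r : ℝ, S.indicator g (r, s)
            = (Ici s).indicator (fun r => ENNReal.ofReal (r ^ d) * G s) r := by
          intro r
          by_cases h : s ≤ r <;> simp [Set.indicator, hS, hg, h]
        simp_rw [this]
        rw [lintegral_indicator measurableSet_Ici, Measure.restrict_restrict measurableSet_Ici,
          (by rw [Set.inter_eq_left.mpr (Set.Ici_subset_Ioi.mpr hs)] :
            volume.restrict (Ici s ∩ Ioi 0) = volume.restrict (Ici s)),
          lintegral_mul_const _ ((measurable_id'.pow_const d).ennreal_ofReal),
          Measure.restrict_congr_set Ioi_ae_eq_Ici.symm, lint_Ioi_rpow hd hs]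
    _ = ENNReal.ofReal (1/(-d-1)) * ∫⁻ s in Ioi (0:ℝ), ENNReal.ofReal (s ^ (d+1)) * G s := by
        rw [← lintegral_const_mul' _ _ ENNReal.ofReal_ne_top]
        refine setLIntegral_congr_fun measurableSet_Ioi (fun s hs => ?_)
        rw [← mul_assoc, ← ENNReal.ofReal_mul (by
          have : (0:ℝ) < -d-1 := by linarith
          positivity)]
        congr 2
        ring

lemma swap_B {d : ℝ} (hd : -1 < d) (G : ℝ → ℝ≥0∞) (hG : Measurable G) :
    ∫⁻ r in Ioi (0:ℝ), ENNReal.ofReal (r ^ d) * ∫⁻ s in Ioi r, G s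
      = ENNReal.ofReal (1/(d+1)) * ∫⁻ s in Ioi (0:ℝ), ENNReal.ofReal (s ^ (d+1)) * G s := by
  set S : Set (ℝ × ℝ) := {p : ℝ × ℝ | p.1 < p.2} with hS
  have hSm : MeasurableSet S := measurableSet_lt measurable_fst measurable_snd
  set g : ℝ × ℝ → ℝ≥0∞ := fun p => ENNReal.ofReal (p.1 ^ d) * G p.2 with hg
  have hgm : Measurable (S.indicator g) := (measurable_core G hG).indicator hSm
  calc ∫⁻ r in Ioi (0:ℝ), ENNReal.ofReal (r ^ d) * ∫⁻ s in Ioi r, G s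
      = ∫⁻ r in Ioi (0:ℝ), ∫⁻ s in Ioi (0:ℝ), S.indicator g (r, s) := by
        refine setLIntegral_congr_fun measurableSet_Ioi (fun r hr => ?_)
        have : ∀ s : ℝ, S.indicator g (r, s)
            = (Ioi r).indicator (fun s => ENNReal.ofReal (r ^ d) * G s) s := by
          intro s
          by_cases h : r < s <;> simp [Set.indicator, hS, hg, h]
        simp_rw [this]
        rw [lintegral_indicator measurableSet_Ioi, Measure.restrict_restrict measurableSet_Ioi,
          (by rw [Set.Ioi_inter_Ioi, max_eq_left (le_of_lt hr)] :
            volume.restrict (Ioi r ∩ Ioi 0) = volume.restrict (Ioi r)),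
          lintegral_const_mul' _ _ ENNReal.ofReal_ne_top]
    _ = ∫⁻ s in Ioi (0:ℝ), ∫⁻ r in Ioi (0:ℝ), S.indicator g (r, s) := by
        exact lintegral_lintegral_swap hgm.aemeasurable
    _ = ∫⁻ s in Ioi (0:ℝ), ENNReal.ofReal (s ^ (d+1) / (d+1)) * G s := by
        refine setLIntegral_congr_fun measurableSet_Ioi (fun s hs => ?_)
        have : ∀ r : ℝ, S.indicator g (r, s)
            = (Iio s).indicator (fun r => ENNReal.ofReal (r ^ d) * G s) r := by
          intro r
          by_cases h : r < s <;> simp [Set.indicator, hS, hg, h]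
        simp_rw [this]
        rw [lintegral_indicator measurableSet_Iio, Measure.restrict_restrict measurableSet_Iio,
          Set.Iio_inter_Ioi,
          lintegral_mul_const _ ((measurable_id'.pow_const d).ennreal_ofReal),
          Measure.restrict_congr_set Ioo_ae_eq_Ioc, lint_Ioc_rpow hd hs.le]
    _ = ENNReal.ofReal (1/(d+1)) * ∫⁻ s in Ioi (0:ℝ), ENNReal.ofReal (s ^ (d+1)) * G s := by
        rw [← lintegral_const_mul' _ _ ENNReal.ofReal_ne_top]
        refine setLIntegral_congr_fun measurableSet_Ioi (fun s hs => ?_)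
        rw [← mul_assoc, ← ENNReal.ofReal_mul (by
          have : (0:ℝ) < d+1 := by linarith
          positivity)]
        congr 2
        ring

lemma hardy_int_A {q β : ℝ} (hq : 1 ≤ q) (hβ : β < -1) (g : ℝ → ℝ≥0∞) (hg : Measurable g) :
    ∫⁻ r in Ioi (0:ℝ), ENNReal.ofReal (r ^ β) * (∫⁻ s in Ioc (0:ℝ) r, g s) ^ q
      ≤ ENNReal.ofReal ((q / (-β-1)) ^ q)
        * ∫⁻ s in Ioi (0:ℝ), ENNReal.ofReal (s ^ (β+q)) * g s ^ q := by
  rcases hq.eq_or_lt with rfl | hq1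
  · simp only [ENNReal.rpow_one, Real.rpow_one]
    rw [swap_A hβ g hg]
  · have hq0 : 0 < q := lt_of_lt_of_le one_pos hq
    have hqne : q ≠ 0 := ne_of_gt hq0
    have h1q : q - 1 ≠ 0 := by linarith
    obtain ⟨c, hc, hcq⟩ : ∃ c : ℝ, 0 < c ∧ c * q = -β - 1 :=
      ⟨(-β-1)/q, div_pos (by linarith) hq0, by field_simp⟩
    have hconj : q.HolderConjugate (q/(q-1)) := Real.HolderConjugate.conjExponent hq1
    obtain ⟨l, hlp', hlq⟩ : ∃ l : ℝ, l * (q/(q-1)) = 1 - c ∧ l * q = (1-c)*(q-1) :=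
      ⟨(1-c)*(q-1)/q, by field_simp, by field_simp⟩
    have hβc : β = -c*q - 1 := by linarith
    set A : ℝ → ℝ≥0∞ := fun r => ∫⁻ s in Ioc (0:ℝ) r, ENNReal.ofReal (s ^ (l*q)) * g s ^ q
      with hA_def
    have hGm : Measurable (fun s : ℝ => ENNReal.ofReal (s ^ (l*q)) * g s ^ q) :=
      ((measurable_id'.pow_const (l*q)).ennreal_ofReal).mul (hg.pow_const q)
    have key : ∀ r : ℝ, 0 < r → (∫⁻ s in Ioc (0:ℝ) r, g s) ^ q
        ≤ A r * ENNReal.ofReal ((r ^ c / c) ^ (q-1)) := by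
      intro r hr
      have h1 : ∫⁻ s in Ioc (0:ℝ) r, g s
          = ∫⁻ s in Ioc (0:ℝ) r,
              ((fun s => g s * ENNReal.ofReal (s ^ l)) * (fun s => ENNReal.ofReal (s ^ (-l)))) s := by
        refine setLIntegral_congr_fun measurableSet_Ioc (fun s hs => ?_)
        simp only [Pi.mul_apply]
        rw [mul_assoc, ← ENNReal.ofReal_mul (Real.rpow_nonneg hs.1.le _),
          ← Real.rpow_add hs.1, add_neg_cancel, Real.rpow_zero, ENNReal.ofReal_one, mul_one]
      have h2 := ENNReal.lintegral_mul_le_Lp_mul_Lq (volume.restrict (Ioc (0:ℝ) r)) hconj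
          ((hg.mul ((measurable_id'.pow_const l).ennreal_ofReal)).aemeasurable)
          (((measurable_id'.pow_const (-l)).ennreal_ofReal).aemeasurable)
      erw [← h1] at h2
      have h3 : ∫⁻ a in Ioc (0:ℝ) r, (g a * ENNReal.ofReal (a ^ l)) ^ q = A r := by
        rw [hA_def]
        refine setLIntegral_congr_fun measurableSet_Ioc (fun s hs => ?_)
        rw [ENNReal.mul_rpow_of_nonneg _ _ hq0.le,
          ENNReal.ofReal_rpow_of_pos (Real.rpow_pos_of_pos hs.1 l),
          ← Real.rpow_mul hs.1.le, mul_comm]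
      have h4 : ∫⁻ a in Ioc (0:ℝ) r, ENNReal.ofReal (a ^ (-l)) ^ (q/(q-1))
          = ENNReal.ofReal (r ^ c / c) := by
        have e1 : ∫⁻ a in Ioc (0:ℝ) r, ENNReal.ofReal (a ^ (-l)) ^ (q/(q-1))
            = ∫⁻ a in Ioc (0:ℝ) r, ENNReal.ofReal (a ^ (c-1)) := by
          refine setLIntegral_congr_fun measurableSet_Ioc (fun s hs => ?_)
          rw [ENNReal.ofReal_rpow_of_pos (Real.rpow_pos_of_pos hs.1 _),
            ← Real.rpow_mul hs.1.le]
          congr 2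
          have : -l * (q/(q-1)) = -(l * (q/(q-1))) := by ring
          rw [this, hlp']
          ring
        rw [e1, lint_Ioc_rpow (by linarith) hr.le]
        have : c - 1 + 1 = c := by ring
        rw [this]
      have h5 : (∫⁻ s in Ioc (0:ℝ) r, g s) ^ q
          ≤ ((A r) ^ (1/q) * (ENNReal.ofReal (r ^ c / c)) ^ (1/(q/(q-1)))) ^ q := by
        apply ENNReal.rpow_le_rpow _ hq0.le
        rw [← h3, ← h4]
        exact h2
      refine h5.trans (le_of_eq ?_)
      rw [ENNReal.mul_rpow_of_nonneg _ _ hq0.le, ← ENNReal.rpow_mul, ← ENNReal.rpow_mul,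
        one_div_mul_cancel hqne, ENNReal.rpow_one]
      have hexp : 1/(q/(q-1)) * q = q - 1 := by field_simp
      rw [hexp, ENNReal.ofReal_rpow_of_nonneg
        (div_nonneg (Real.rpow_nonneg hr.le c) hc.le) (by linarith)]
    calc ∫⁻ r in Ioi (0:ℝ), ENNReal.ofReal (r ^ β) * (∫⁻ s in Ioc (0:ℝ) r, g s) ^ q
        ≤ ∫⁻ r in Ioi (0:ℝ), ENNReal.ofReal (c^(1-q)) * (ENNReal.ofReal (r ^ (-c-1)) * A r) := by
          refine lintegral_mono_ae ?_
          filter_upwards [ae_restrict_mem measurableSet_Ioi] with r hr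
          refine le_trans (mul_le_mul_right (key r hr) _) (le_of_eq ?_)
          have e2 : (r^c/c)^(q-1) = r^(c*(q-1)) * c^(1-q) := by
            rw [Real.div_rpow (Real.rpow_nonneg (le_of_lt hr) c) hc.le,
              ← Real.rpow_mul (le_of_lt hr), div_eq_mul_inv, ← Real.rpow_neg hc.le]
            congr 1
            ring
          have e3 : ENNReal.ofReal (r^β) * ENNReal.ofReal (r^(c*(q-1)))
              = ENNReal.ofReal (r^(-c-1)) := by
            rw [← ENNReal.ofReal_mul (Real.rpow_nonneg (le_of_lt hr) _),
              ← Real.rpow_add hr]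
            have : β + c*(q-1) = -c-1 := by rw [hβc]; ring
            rw [this]
          rw [e2, ENNReal.ofReal_mul (Real.rpow_nonneg (le_of_lt hr) _), ← e3]
          ring
      _ = ENNReal.ofReal (c^(1-q)) * ∫⁻ r in Ioi (0:ℝ), ENNReal.ofReal (r ^ (-c-1)) * A r :=
          lintegral_const_mul' _ _ ENNReal.ofReal_ne_top
      _ = ENNReal.ofReal (c^(1-q)) * (ENNReal.ofReal (1/c)
            * ∫⁻ s in Ioi (0:ℝ), ENNReal.ofReal (s ^ (-c-1+1))
                * (ENNReal.ofReal (s ^ (l*q)) * g s ^ q)) := by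
          simp only [hA_def]
          rw [swap_A (by linarith : (-c-1:ℝ) < -1) _ hGm]
          congr 3
          ring
      _ = ENNReal.ofReal ((q / (-β-1)) ^ q)
            * ∫⁻ s in Ioi (0:ℝ), ENNReal.ofReal (s ^ (β+q)) * g s ^ q := by
          rw [← mul_assoc, ← ENNReal.ofReal_mul (Real.rpow_nonneg hc.le _)]
          congr 1
          · congr 1
            have hc' : c ≠ 0 := ne_of_gt hc
            have hinv : q/(-β-1) = 1/c := by
              rw [← hcq]; field_simp
            rw [hinv, one_div, Real.inv_rpow hc.le, ← Real.rpow_neg hc.le,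
              ← Real.rpow_neg_one c, ← Real.rpow_add hc]
            congr 1
            ring
          · refine setLIntegral_congr_fun measurableSet_Ioi (fun s hs => ?_)
            rw [← mul_assoc, ← ENNReal.ofReal_mul (Real.rpow_nonneg (le_of_lt hs) _),
              ← Real.rpow_add hs]
            have : -c-1+1 + l*q = β + q := by rw [hlq, hβc]; ring
            rw [this]

lemma hardy_int_B {q β : ℝ} (hq : 1 ≤ q) (hβ : -1 < β) (g : ℝ → ℝ≥0∞) (hg : Measurable g) :
    ∫⁻ r in Ioi (0:ℝ), ENNReal.ofReal (r ^ β) * (∫⁻ s in Ioi r, g s) ^ q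
      ≤ ENNReal.ofReal ((q / (β+1)) ^ q)
        * ∫⁻ s in Ioi (0:ℝ), ENNReal.ofReal (s ^ (β+q)) * g s ^ q := by
  rcases hq.eq_or_lt with rfl | hq1
  · simp only [ENNReal.rpow_one, Real.rpow_one]
    rw [swap_B hβ g hg]
  · have hq0 : 0 < q := lt_of_lt_of_le one_pos hq
    have hqne : q ≠ 0 := ne_of_gt hq0
    have h1q : q - 1 ≠ 0 := by linarith
    obtain ⟨c, hc, hcq⟩ : ∃ c : ℝ, 0 < c ∧ c * q = β + 1 :=
      ⟨(β+1)/q, div_pos (by linarith) hq0, by field_simp⟩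
    have hconj : q.HolderConjugate (q/(q-1)) := Real.HolderConjugate.conjExponent hq1
    obtain ⟨l, hlp', hlq⟩ : ∃ l : ℝ, l * (q/(q-1)) = 1 + c ∧ l * q = (1+c)*(q-1) :=
      ⟨(1+c)*(q-1)/q, by field_simp, by field_simp⟩
    have hβc : β = c*q - 1 := by linarith
    set A : ℝ → ℝ≥0∞ := fun r => ∫⁻ s in Ioi r, ENNReal.ofReal (s ^ (l*q)) * g s ^ q
      with hA_def
    have hGm : Measurable (fun s : ℝ => ENNReal.ofReal (s ^ (l*q)) * g s ^ q) :=
      ((measurable_id'.pow_const (l*q)).ennreal_ofReal).mul (hg.pow_const q)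
    have key : ∀ r : ℝ, 0 < r → (∫⁻ s in Ioi r, g s) ^ q
        ≤ A r * ENNReal.ofReal ((r ^ (-c) / c) ^ (q-1)) := by
      intro r hr
      have h1 : ∫⁻ s in Ioi r, g s
          = ∫⁻ s in Ioi r,
              ((fun s => g s * ENNReal.ofReal (s ^ l)) * (fun s => ENNReal.ofReal (s ^ (-l)))) s := by
        refine setLIntegral_congr_fun measurableSet_Ioi (fun s hs => ?_)
        have hs' : (0:ℝ) < s := lt_trans hr hs
        simp only [Pi.mul_apply]
        rw [mul_assoc, ← ENNReal.ofReal_mul (Real.rpow_nonneg hs'.le _),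
          ← Real.rpow_add hs', add_neg_cancel, Real.rpow_zero, ENNReal.ofReal_one, mul_one]
      have h2 := ENNReal.lintegral_mul_le_Lp_mul_Lq (volume.restrict (Ioi r)) hconj
          ((hg.mul ((measurable_id'.pow_const l).ennreal_ofReal)).aemeasurable)
          (((measurable_id'.pow_const (-l)).ennreal_ofReal).aemeasurable)
      erw [← h1] at h2
      have h3 : ∫⁻ a in Ioi r, (g a * ENNReal.ofReal (a ^ l)) ^ q = A r := by
        rw [hA_def]
        refine setLIntegral_congr_fun measurableSet_Ioi (fun s hs => ?_)
        have hs' : (0:ℝ) < s := lt_trans hr hs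
        rw [ENNReal.mul_rpow_of_nonneg _ _ hq0.le,
          ENNReal.ofReal_rpow_of_pos (Real.rpow_pos_of_pos hs' l),
          ← Real.rpow_mul hs'.le, mul_comm]
      have h4 : ∫⁻ a in Ioi r, ENNReal.ofReal (a ^ (-l)) ^ (q/(q-1))
          = ENNReal.ofReal (r ^ (-c) / c) := by
        have e1 : ∫⁻ a in Ioi r, ENNReal.ofReal (a ^ (-l)) ^ (q/(q-1))
            = ∫⁻ a in Ioi r, ENNReal.ofReal (a ^ (-1-c)) := by
          refine setLIntegral_congr_fun measurableSet_Ioi (fun s hs => ?_)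
          have hs' : (0:ℝ) < s := lt_trans hr hs
          rw [ENNReal.ofReal_rpow_of_pos (Real.rpow_pos_of_pos hs' _),
            ← Real.rpow_mul hs'.le]
          congr 2
          have : -l * (q/(q-1)) = -(l * (q/(q-1))) := by ring
          rw [this, hlp']
          ring
        rw [e1, lint_Ioi_rpow (by linarith) hr]
        have e2 : (-1-c) + 1 = -c := by ring
        have e3 : -(-1-c) - 1 = c := by ring
        rw [e2, e3]
      have h5 : (∫⁻ s in Ioi r, g s) ^ q
          ≤ ((A r) ^ (1/q) * (ENNReal.ofReal (r ^ (-c) / c)) ^ (1/(q/(q-1)))) ^ q := by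
        apply ENNReal.rpow_le_rpow _ hq0.le
        rw [← h3, ← h4]
        exact h2
      refine h5.trans (le_of_eq ?_)
      rw [ENNReal.mul_rpow_of_nonneg _ _ hq0.le, ← ENNReal.rpow_mul, ← ENNReal.rpow_mul,
        one_div_mul_cancel hqne, ENNReal.rpow_one]
      have hexp : 1/(q/(q-1)) * q = q - 1 := by field_simp
      rw [hexp, ENNReal.ofReal_rpow_of_nonneg
        (div_nonneg (Real.rpow_nonneg hr.le _) hc.le) (by linarith)]
    calc ∫⁻ r in Ioi (0:ℝ), ENNReal.ofReal (r ^ β) * (∫⁻ s in Ioi r, g s) ^ q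
        ≤ ∫⁻ r in Ioi (0:ℝ), ENNReal.ofReal (c^(1-q)) * (ENNReal.ofReal (r ^ (c-1)) * A r) := by
          refine lintegral_mono_ae ?_
          filter_upwards [ae_restrict_mem measurableSet_Ioi] with r hr
          refine le_trans (mul_le_mul_right (key r hr) _) (le_of_eq ?_)
          have e2 : (r^(-c)/c)^(q-1) = r^(-c*(q-1)) * c^(1-q) := by
            rw [Real.div_rpow (Real.rpow_nonneg (le_of_lt hr) _) hc.le,
              ← Real.rpow_mul (le_of_lt hr), div_eq_mul_inv, ← Real.rpow_neg hc.le]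
            congr 1
            ring
          have e3 : ENNReal.ofReal (r^β) * ENNReal.ofReal (r^(-c*(q-1)))
              = ENNReal.ofReal (r^(c-1)) := by
            rw [← ENNReal.ofReal_mul (Real.rpow_nonneg (le_of_lt hr) _),
              ← Real.rpow_add hr]
            have : β + -c*(q-1) = c-1 := by rw [hβc]; ring
            rw [this]
          rw [e2, ENNReal.ofReal_mul (Real.rpow_nonneg (le_of_lt hr) _), ← e3]
          ring
      _ = ENNReal.ofReal (c^(1-q)) * ∫⁻ r in Ioi (0:ℝ), ENNReal.ofReal (r ^ (c-1)) * A r :=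
          lintegral_const_mul' _ _ ENNReal.ofReal_ne_top
      _ = ENNReal.ofReal (c^(1-q)) * (ENNReal.ofReal (1/c)
            * ∫⁻ s in Ioi (0:ℝ), ENNReal.ofReal (s ^ (c-1+1))
                * (ENNReal.ofReal (s ^ (l*q)) * g s ^ q)) := by
          simp only [hA_def]
          rw [swap_B (by linarith : (-1:ℝ) < c-1) _ hGm]
          norm_num
      _ = ENNReal.ofReal ((q / (β+1)) ^ q)
            * ∫⁻ s in Ioi (0:ℝ), ENNReal.ofReal (s ^ (β+q)) * g s ^ q := by
          rw [← mul_assoc, ← ENNReal.ofReal_mul (Real.rpow_nonneg hc.le _)]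
          congr 1
          · congr 1
            have hc' : c ≠ 0 := ne_of_gt hc
            have hinv : q/(β+1) = 1/c := by
              rw [← hcq]; field_simp
            rw [hinv, one_div, Real.inv_rpow hc.le, ← Real.rpow_neg hc.le,
              ← Real.rpow_neg_one c, ← Real.rpow_add hc]
            congr 1
            ring
          · refine setLIntegral_congr_fun measurableSet_Ioi (fun s hs => ?_)
            rw [← mul_assoc, ← ENNReal.ofReal_mul (Real.rpow_nonneg (le_of_lt hs) _),
              ← Real.rpow_add hs]
            have : c-1+1 + l*q = β + q := by rw [hlq, hβc]; ring
            rw [this]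

open Metric in
lemma lintegral_polar {E : Type*} [NormedAddCommGroup E] [NormedSpace ℝ E] [MeasurableSpace E]
    [BorelSpace E] [FiniteDimensional ℝ E] [Nontrivial E]
    (μ : Measure E) [μ.IsAddHaarMeasure] (F : E → ℝ≥0∞) (hF : Measurable F) :
    ∫⁻ x, F x ∂μ = ∫⁻ ω : Metric.sphere (0:E) 1, (∫⁻ r in Ioi (0:ℝ),
      ENNReal.ofReal (r ^ (Module.finrank ℝ E - 1)) * F (r • (ω : E))) ∂μ.toSphere := by
  have hmg : Measurable (fun p : Metric.sphere (0:E) 1 × Ioi (0:ℝ) => F ((p.2 : ℝ) • (p.1 : E))) :=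
    hF.comp ((continuous_subtype_val.comp continuous_snd).smul
      (continuous_subtype_val.comp continuous_fst)).measurable
  calc ∫⁻ x, F x ∂μ
      = ∫⁻ x in ({(0:E)}ᶜ : Set E), F x ∂μ := by
        rw [MeasureTheory.restrict_compl_singleton]
    _ = ∫⁻ x : ({(0:E)}ᶜ : Set E), F x ∂(μ.comap Subtype.val) :=
        (lintegral_subtype_comap (measurableSet_singleton 0).compl _).symm
    _ = ∫⁻ p : Metric.sphere (0:E) 1 × Ioi (0:ℝ), F ((p.2 : ℝ) • (p.1 : E))
          ∂(μ.toSphere.prod (Measure.volumeIoiPow (Module.finrank ℝ E - 1))) := by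
        rw [← μ.measurePreserving_homeomorphUnitSphereProd.lintegral_comp hmg]
        refine lintegral_congr fun x => ?_
        simp only [homeomorphUnitSphereProd_apply_fst_coe, homeomorphUnitSphereProd_apply_snd_coe]
        rw [smul_inv_smul₀ (norm_ne_zero_iff.2 x.2)]
    _ = ∫⁻ ω : Metric.sphere (0:E) 1, (∫⁻ r : Ioi (0:ℝ), F ((r : ℝ) • (ω : E))
          ∂(Measure.volumeIoiPow (Module.finrank ℝ E - 1))) ∂μ.toSphere :=
        lintegral_prod _ hmg.aemeasurable
    _ = ∫⁻ ω : Metric.sphere (0:E) 1, (∫⁻ r in Ioi (0:ℝ),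
          ENNReal.ofReal (r ^ (Module.finrank ℝ E - 1)) * F (r • (ω : E))) ∂μ.toSphere := by
        refine lintegral_congr fun ω => ?_
        have hmeas : Measurable fun r : Ioi (0:ℝ) => F ((r : ℝ) • (ω : E)) :=
          hF.comp (continuous_subtype_val.smul continuous_const).measurable
        rw [Measure.volumeIoiPow,
          lintegral_withDensity_eq_lintegral_mul _
            ((measurable_subtype_coe.pow_const _).ennreal_ofReal) hmeas]
        rw [← lintegral_subtype_comap measurableSet_Ioi
          (fun r : ℝ => ENNReal.ofReal (r ^ (Module.finrank ℝ E - 1)) * F (r • (ω : E)))]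
        rfl

/-- Classical `N`-dimensional Hardy inequality: for `1 ≤ q < ∞`, `q ≠ N`, and
`u ∈ C₀^∞(ℝ^N \ {0})`,
`∫ |u|^q/|x|^q ≤ (q/|N-q|)^q ∫ |∇u|^q`. -/
theorem hardy_inequality (N : ℕ) (hN : 1 ≤ N) (q : ℝ) (hq : 1 ≤ q) (hqN : q ≠ (N : ℝ))
    (u : EuclideanSpace ℝ (Fin N) → ℝ) (hu : ContDiff ℝ (⊤ : ℕ∞) u) (hsupp : HasCompactSupport u)
    (h0 : ∃ ε > 0, ∀ x : EuclideanSpace ℝ (Fin N), ‖x‖ < ε → u x = 0) :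
    ∫ x : EuclideanSpace ℝ (Fin N), |u x| ^ q / ‖x‖ ^ q
      ≤ (q / |(N : ℝ) - q|) ^ q * ∫ x : EuclideanSpace ℝ (Fin N), ‖fderiv ℝ u x‖ ^ q := by
  classical
  haveI : Nontrivial (EuclideanSpace ℝ (Fin N)) :=
    Module.nontrivial_of_finrank_pos (R := ℝ)
      (by rw [finrank_euclideanSpace_fin]; exact hN)
  obtain ⟨ε, hε, hε0⟩ := h0
  obtain ⟨R, hR⟩ : ∃ R : ℝ, tsupport u ⊆ Metric.closedBall 0 R :=
    hsupp.isBounded.subset_closedBall 0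
  have hq0 : 0 < q := lt_of_lt_of_le one_pos hq
  have hu' : Differentiable ℝ u := hu.differentiable (by simp)
  have hfc : Continuous (fderiv ℝ u) := hu.continuous_fderiv (by simp)
  set Fl : EuclideanSpace ℝ (Fin N) → ℝ := fun x => |u x| ^ q / ‖x‖ ^ q with hFl_def
  set Gr : EuclideanSpace ℝ (Fin N) → ℝ := fun x => ‖fderiv ℝ u x‖ ^ q with hGr_def
  set C : ℝ := (q / |(N : ℝ) - q|) ^ q with hC_def
  have hC : 0 ≤ C := Real.rpow_nonneg (div_nonneg hq0.le (abs_nonneg _)) q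
  have hFl_nonneg : ∀ x, 0 ≤ Fl x := fun x =>
    div_nonneg (Real.rpow_nonneg (abs_nonneg _) q) (Real.rpow_nonneg (norm_nonneg _) q)
  have hGr_nonneg : ∀ x, 0 ≤ Gr x := fun x => Real.rpow_nonneg (norm_nonneg _) q
  have hFl_m : Measurable Fl :=
    ((hu.continuous.abs.measurable).pow_const q).div ((continuous_norm.measurable).pow_const q)
  have hGr_cont : Continuous Gr :=
    (continuous_norm.comp hfc).rpow_const (fun x => Or.inr hq0.le)
  have hGr_supp : HasCompactSupport Gr := by
    have : HasCompactSupport (fderiv ℝ u) := hsupp.fderiv (𝕜 := ℝ)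
    exact this.comp_left (g := fun L => ‖L‖ ^ q) (by
      simp [Real.zero_rpow (ne_of_gt hq0)])
  have hGr_int : Integrable Gr := hGr_cont.integrable_of_hasCompactSupport hGr_supp
  have hcast : ((N - 1 : ℕ) : ℝ) = (N : ℝ) - 1 := by
    rw [Nat.cast_sub hN, Nat.cast_one]
  -- the key lintegral inequality
  have key : ∫⁻ x, ENNReal.ofReal (Fl x)
      ≤ ENNReal.ofReal C * ∫⁻ x, ENNReal.ofReal (Gr x) := by
    rw [lintegral_polar volume _ hFl_m.ennreal_ofReal,
      lintegral_polar volume _ hGr_cont.measurable.ennreal_ofReal,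
      ← lintegral_const_mul' _ _ ENNReal.ofReal_ne_top]
    simp only [finrank_euclideanSpace_fin]
    refine lintegral_mono fun ω => ?_
    have hω : ‖(ω : EuclideanSpace ℝ (Fin N))‖ = 1 := mem_sphere_zero_iff_norm.1 ω.2
    set w : EuclideanSpace ℝ (Fin N) := (ω : EuclideanSpace ℝ (Fin N)) with hw_def
    set g : ℝ → ℝ≥0∞ := fun s => ENNReal.ofReal ‖fderiv ℝ u (s • w)‖ with hg_def
    have hgc : Continuous fun s : ℝ => ‖fderiv ℝ u (s • w)‖ :=
      continuous_norm.comp (hfc.comp (continuous_id.smul continuous_const))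
    have hgm : Measurable g := hgc.measurable.ennreal_ofReal
    have hnorm : ∀ r : ℝ, 0 < r → ‖r • w‖ = r := fun r hr => by
      rw [norm_smul, hω, mul_one, Real.norm_eq_abs, abs_of_pos hr]
    -- derivative along the ray
    have hd : ∀ r : ℝ, HasDerivAt (fun t : ℝ => u (t • w)) (fderiv ℝ u (r • w) w) r := by
      intro r
      have h2 : HasDerivAt (fun t : ℝ => t • w) w r := by
        simpa using (hasDerivAt_id r).smul_const w
      exact (hu' (r • w)).hasFDerivAt.comp_hasDerivAt r h2
    have hφc : Continuous fun s : ℝ => fderiv ℝ u (s • w) w :=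
      (hfc.comp (continuous_id.smul continuous_const)).clm_apply continuous_const
    have habs : ∀ s : ℝ, |fderiv ℝ u (s • w) w| ≤ ‖fderiv ℝ u (s • w)‖ := fun s => by
      calc |fderiv ℝ u (s • w) w| = ‖fderiv ℝ u (s • w) w‖ := (Real.norm_eq_abs _).symm
        _ ≤ ‖fderiv ℝ u (s • w)‖ * ‖w‖ := (fderiv ℝ u (s • w)).le_opNorm w
        _ = ‖fderiv ℝ u (s • w)‖ := by rw [hω, mul_one]
    have hkey : ∀ a b : ℝ, a ≤ b →
        ENNReal.ofReal |u (b • w) - u (a • w)| ≤ ∫⁻ s in Ioc a b, g s := by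
      intro a b hab
      have hFTC : ∫ s in a..b, fderiv ℝ u (s • w) w = u (b • w) - u (a • w) :=
        intervalIntegral.integral_eq_sub_of_hasDerivAt (fun x _ => hd x)
          (hφc.intervalIntegrable a b)
      have h1 : |u (b • w) - u (a • w)| ≤ ∫ s in a..b, |fderiv ℝ u (s • w) w| := by
        rw [← hFTC]
        exact intervalIntegral.abs_integral_le_integral_abs hab
      have h2 : ∫ s in a..b, |fderiv ℝ u (s • w) w| ≤ ∫ s in a..b, ‖fderiv ℝ u (s • w)‖ :=
        intervalIntegral.integral_mono_on hab (hφc.abs.intervalIntegrable a b)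
          (hgc.intervalIntegrable a b) (fun x _ => habs x)
      have h3 : ENNReal.ofReal (∫ s in Ioc a b, ‖fderiv ℝ u (s • w)‖)
          = ∫⁻ s in Ioc a b, g s :=
        ofReal_integral_eq_lintegral_ofReal (hgc.integrableOn_Ioc)
          (ae_of_all _ fun s => norm_nonneg _)
      rw [← h3]
      apply ENNReal.ofReal_le_ofReal
      rw [← intervalIntegral.integral_of_le hab]
      exact h1.trans h2
    -- two sides of the pointwise identity
    have step1 : ∫⁻ r in Ioi (0:ℝ), ENNReal.ofReal (r ^ (N - 1)) * ENNReal.ofReal (Fl (r • w))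
        = ∫⁻ r in Ioi (0:ℝ), ENNReal.ofReal (r ^ ((N:ℝ) - 1 - q))
            * (ENNReal.ofReal |u (r • w)|) ^ q := by
      refine setLIntegral_congr_fun measurableSet_Ioi (fun r hr => ?_)
      have hr : (0:ℝ) < r := hr
      rw [hFl_def]
      simp only []
      rw [hnorm r hr, ENNReal.ofReal_rpow_of_nonneg (abs_nonneg _) hq0.le,
        ← ENNReal.ofReal_mul (pow_nonneg hr.le _),
        ← ENNReal.ofReal_mul (Real.rpow_nonneg hr.le _)]
      congr 1
      rw [← Real.rpow_natCast r (N-1), hcast, div_eq_mul_inv, ← Real.rpow_neg hr.le]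
      calc r ^ ((N:ℝ) - 1) * (|u (r • w)| ^ q * r ^ (-q))
          = (r ^ ((N:ℝ) - 1) * r ^ (-q)) * |u (r • w)| ^ q := by ring
        _ = r ^ ((N:ℝ) - 1 - q) * |u (r • w)| ^ q := by
            rw [← Real.rpow_add hr]
            have : (N:ℝ) - 1 + -q = (N:ℝ) - 1 - q := by ring
            rw [this]
    have step3 : ∫⁻ s in Ioi (0:ℝ), ENNReal.ofReal (s ^ (((N:ℝ) - 1 - q) + q)) * (g s) ^ q
        = ∫⁻ r in Ioi (0:ℝ), ENNReal.ofReal (r ^ (N - 1)) * ENNReal.ofReal (Gr (r • w)) := by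
      refine setLIntegral_congr_fun measurableSet_Ioi (fun s hs => ?_)
      have hs : (0:ℝ) < s := hs
      rw [hGr_def]
      simp only []
      rw [hg_def]
      simp only []
      rw [ENNReal.ofReal_rpow_of_nonneg (norm_nonneg _) hq0.le,
        ← Real.rpow_natCast s (N-1), hcast]
      have : (N:ℝ) - 1 - q + q = (N:ℝ) - 1 := by ring
      rw [this]
    rw [step1, ← step3]
    rcases lt_or_gt_of_ne hqN with hlt | hgt
    · -- q < N : integrate from infinity
      have hβ : (-1:ℝ) < (N:ℝ) - 1 - q := by linarith
      have habs2 : |(N:ℝ) - q| = (N:ℝ) - q := abs_of_pos (by linarith)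
      have hconst : C = (q / (((N:ℝ) - 1 - q) + 1)) ^ q := by
        rw [hC_def, habs2]
        have : (N:ℝ) - 1 - q + 1 = (N:ℝ) - q := by ring
        rw [this]
      have hpt : ∀ r : ℝ, 0 < r →
          ENNReal.ofReal |u (r • w)| ≤ ∫⁻ s in Ioi r, g s := by
        intro r hr
        set b : ℝ := max r R + 1 with hb_def
        have hrb : r ≤ b := le_trans (le_max_left _ _) (by linarith [le_refl (max r R)])
        have hub : u (b • w) = 0 := by
          apply image_eq_zero_of_notMem_tsupport
          intro hmem
          have := hR hmem
          rw [Metric.mem_closedBall, dist_zero_right] at this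
          have hbpos : 0 < b := lt_of_lt_of_le hr hrb
          rw [hnorm b hbpos] at this
          have : R < b := lt_of_le_of_lt (le_max_right r R) (by linarith)
          linarith [hR hmem, this]
        have h1 : ENNReal.ofReal |u (r • w)| ≤ ∫⁻ s in Ioc r b, g s := by
          have := hkey r b hrb
          rwa [hub, zero_sub, abs_neg] at this
        exact h1.trans (lintegral_mono_set Ioc_subset_Ioi_self)
      calc ∫⁻ r in Ioi (0:ℝ), ENNReal.ofReal (r ^ ((N:ℝ) - 1 - q))
              * (ENNReal.ofReal |u (r • w)|) ^ q
          ≤ ∫⁻ r in Ioi (0:ℝ), ENNReal.ofReal (r ^ ((N:ℝ) - 1 - q))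
              * (∫⁻ s in Ioi r, g s) ^ q := by
            refine lintegral_mono_ae ?_
            filter_upwards [ae_restrict_mem measurableSet_Ioi] with r hr
            exact mul_le_mul_right (ENNReal.rpow_le_rpow (hpt r hr) hq0.le) _
        _ ≤ ENNReal.ofReal ((q / (((N:ℝ) - 1 - q) + 1)) ^ q)
              * ∫⁻ s in Ioi (0:ℝ), ENNReal.ofReal (s ^ (((N:ℝ) - 1 - q) + q)) * (g s) ^ q :=
            hardy_int_B hq hβ g hgm
        _ = ENNReal.ofReal C
              * ∫⁻ s in Ioi (0:ℝ), ENNReal.ofReal (s ^ (((N:ℝ) - 1 - q) + q)) * (g s) ^ q := by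
            rw [← hconst]
    · -- N < q : integrate from zero
      have hβ : (N:ℝ) - 1 - q < -1 := by linarith
      have habs2 : |(N:ℝ) - q| = -((N:ℝ) - q) := abs_of_neg (by linarith)
      have hconst : C = (q / (-((N:ℝ) - 1 - q) - 1)) ^ q := by
        rw [hC_def, habs2]
        have : -((N:ℝ) - 1 - q) - 1 = -((N:ℝ) - q) := by ring
        rw [this]
      have hpt : ∀ r : ℝ, 0 < r →
          ENNReal.ofReal |u (r • w)| ≤ ∫⁻ s in Ioc (0:ℝ) r, g s := by
        intro r hr
        have h00 : u ((0:ℝ) • w) = 0 := by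
          rw [zero_smul]
          exact hε0 0 (by simpa using hε)
        have := hkey 0 r hr.le
        rwa [h00, sub_zero] at this
      calc ∫⁻ r in Ioi (0:ℝ), ENNReal.ofReal (r ^ ((N:ℝ) - 1 - q))
              * (ENNReal.ofReal |u (r • w)|) ^ q
          ≤ ∫⁻ r in Ioi (0:ℝ), ENNReal.ofReal (r ^ ((N:ℝ) - 1 - q))
              * (∫⁻ s in Ioc (0:ℝ) r, g s) ^ q := by
            refine lintegral_mono_ae ?_
            filter_upwards [ae_restrict_mem measurableSet_Ioi] with r hr
            exact mul_le_mul_right (ENNReal.rpow_le_rpow (hpt r hr) hq0.le) _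
        _ ≤ ENNReal.ofReal ((q / (-((N:ℝ) - 1 - q) - 1)) ^ q)
              * ∫⁻ s in Ioi (0:ℝ), ENNReal.ofReal (s ^ (((N:ℝ) - 1 - q) + q)) * (g s) ^ q :=
            hardy_int_A hq hβ g hgm
        _ = ENNReal.ofReal C
              * ∫⁻ s in Ioi (0:ℝ), ENNReal.ofReal (s ^ (((N:ℝ) - 1 - q) + q)) * (g s) ^ q := by
            rw [← hconst]
  -- convert to Bochner integrals
  have h2 : ∫⁻ x, ENNReal.ofReal (Gr x) = ENNReal.ofReal (∫ x, Gr x) :=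
    (ofReal_integral_eq_lintegral_ofReal hGr_int (ae_of_all _ hGr_nonneg)).symm
  rw [h2] at key
  have hGr_int_nonneg : 0 ≤ ∫ x, Gr x := integral_nonneg hGr_nonneg
  have h1 : ∫ x, Fl x = (∫⁻ x, ENNReal.ofReal (Fl x)).toReal :=
    integral_eq_lintegral_of_nonneg_ae (ae_of_all _ hFl_nonneg)
      hFl_m.aestronglyMeasurable
  calc ∫ x, Fl x = (∫⁻ x, ENNReal.ofReal (Fl x)).toReal := h1
    _ ≤ (ENNReal.ofReal C * ENNReal.ofReal (∫ x, Gr x)).toReal := by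
        apply ENNReal.toReal_mono _ key
        exact ENNReal.mul_ne_top ENNReal.ofReal_ne_top ENNReal.ofReal_ne_top
    _ = C * ∫ x, Gr x := by
        rw [← ENNReal.ofReal_mul hC, ENNReal.toReal_ofReal (mul_nonneg hC hGr_int_nonneg)]
end

section
/- For α ≠ 1, the function u(r,θ) = r^{α-2} (sin 2θ)^{(α-1)/2} is a supersolution, on the region r > 0, 0 < θ < π/2, of the equation −r^{2α-5} ∂_r(r^{5-2α} ∂_r u) − r^{-2} (sin 2θ)^{α-2} ∂_θ((sin 2θ)^{2-α} ∂_θ u) ≥ C r^{-2} (sin 2θ)^{-1} u, with C a positive constant multiple of (α-1)². -/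
/-!
Both parts of the operator are of the form `f^{-w} (f^w (A f^q)')'`, with `f(r) = r` for the
radial part and `f(θ) = sin 2θ` for the angular part, and such an expression is computed once
and for all by the chain rule. With `s = sin 2θ` and `c = cos 2θ` this gives
`(α-2)² r^{α-4} s^{(α-1)/2}` and `(α-1) r^{α-4} s^{(α-5)/2} ((α-1) c² + 2 s²)`, and `c² = 1 - s²`
collapses their sum to `r^{α-4} s^{(α-5)/2} (s² + (α-1)²)`. Since `0 < s ≤ 1`, this dominates
`(α-1)² r^{α-4} s^{(α-3)/2} = (α-1)² r^{-2} s^{-1} u`.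
-/

open Real Filter Topology Set

theorem rpow_neg_mul_deriv_rpow_mul_deriv_const_mul_rpow {f f' : ℝ → ℝ} {f'' θ : ℝ}
    (w q A : ℝ) (hf : ∀ᶠ t in 𝓝 θ, HasDerivAt f (f' t) t) (hf' : HasDerivAt f' f'' θ)
    (hpos : 0 < f θ) :
    f θ ^ (-w) * deriv (fun t => f t ^ w * deriv (fun t' => A * f t' ^ q) t) θ
      = A * q * ((q + w - 1) * f θ ^ (q - 2) * f' θ ^ 2 + f θ ^ (q - 1) * f'') := by
  have hpos_near : ∀ᶠ t in 𝓝 θ, 0 < f t :=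
    hf.self_of_nhds.continuousAt.eventually (lt_mem_nhds hpos)
  have hflux : (fun t => f t ^ w * deriv (fun t' => A * f t' ^ q) t)
      =ᶠ[𝓝 θ] fun t => A * q * (f t ^ (q + w - 1) * f' t) := by
    filter_upwards [hf, hpos_near] with t hft hft_pos
    rw [((hft.rpow_const (p := q) (Or.inl hft_pos.ne')).const_mul A).deriv,
      show q + w - 1 = w + (q - 1) by ring, rpow_add hft_pos]
    ring
  have hflux_deriv : HasDerivAt (fun t => A * q * (f t ^ (q + w - 1) * f' t))
      (A * q * (f' θ * (q + w - 1) * f θ ^ (q + w - 1 - 1) * f' θ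
        + f θ ^ (q + w - 1) * f'')) θ :=
    ((hf.self_of_nhds.rpow_const (Or.inl hpos.ne')).mul hf').const_mul _
  rw [hflux.deriv_eq, hflux_deriv.deriv,
    show q + w - 1 - 1 = w + (q - 2) by ring, show q + w - 1 = w + (q - 1) by ring,
    rpow_add hpos, rpow_add hpos, rpow_neg hpos.le]
  field_simp

theorem rpow_neg_mul_deriv_rpow_mul_deriv_rpow_mul_const (m p A : ℝ) {x : ℝ} (hx : 0 < x) :
    x ^ (-m) * deriv (fun s => s ^ m * deriv (fun s' => s' ^ p * A) s) x
      = A * p * (p + m - 1) * x ^ (p - 2) := by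
  simp_rw [mul_comm _ A]
  rw [rpow_neg_mul_deriv_rpow_mul_deriv_const_mul_rpow (f := fun s => s) (f' := fun _ => 1)
    m p A (Eventually.of_forall hasDerivAt_id') (hasDerivAt_const x 1) hx]
  ring

theorem sin_two_mul_rpow_neg_mul_deriv_rpow_mul_deriv_const_mul_rpow (w q A : ℝ) {θ : ℝ}
    (hθ : 0 < sin (2 * θ)) :
    sin (2 * θ) ^ (-w) *
        deriv (fun t => sin (2 * t) ^ w * deriv (fun t' => A * sin (2 * t') ^ q) t) θ
      = 4 * A * q * ((q + w - 1) * sin (2 * θ) ^ (q - 2) * cos (2 * θ) ^ 2 - sin (2 * θ) ^ q) := by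
  have hsin (t : ℝ) : HasDerivAt (fun t => sin (2 * t)) (2 * cos (2 * t)) t :=
    (((hasDerivAt_id' t).const_mul 2).sin).congr_deriv (by ring)
  have hcos : HasDerivAt (fun t => 2 * cos (2 * t)) (-4 * sin (2 * θ)) θ :=
    ((((hasDerivAt_id' θ).const_mul 2).cos).const_mul 2).congr_deriv (by ring)
  rw [rpow_neg_mul_deriv_rpow_mul_deriv_const_mul_rpow (f := fun t => sin (2 * t)) w q A
    (Eventually.of_forall hsin) hcos hθ, rpow_sub_one hθ.ne']
  field_simp
  ring

theorem biradial_operator_eq (α : ℝ) {r θ : ℝ} (hr : 0 < r) (hs : 0 < sin (2 * θ)) :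
    -(r ^ (2 * α - 5)) *
        deriv (fun x => x ^ (5 - 2 * α) *
          deriv (fun x' => x' ^ (α - 2) * sin (2 * θ) ^ ((α - 1) / 2)) x) r
      - r ^ (-2 : ℝ) * sin (2 * θ) ^ (α - 2) *
        deriv (fun t => sin (2 * t) ^ (2 - α) *
          deriv (fun t' => r ^ (α - 2) * sin (2 * t') ^ ((α - 1) / 2)) t) θ
      = r ^ (α - 4) * sin (2 * θ) ^ ((α - 1) / 2 - 2) * (sin (2 * θ) ^ 2 + (α - 1) ^ 2) := by
  have radial := rpow_neg_mul_deriv_rpow_mul_deriv_rpow_mul_const (5 - 2 * α) (α - 2)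
    (sin (2 * θ) ^ ((α - 1) / 2)) hr
  have angular := sin_two_mul_rpow_neg_mul_deriv_rpow_mul_deriv_const_mul_rpow (2 - α)
    ((α - 1) / 2) (r ^ (α - 2)) hs
  rw [neg_sub] at radial angular
  have hcos : cos (2 * θ) ^ 2 = 1 - sin (2 * θ) ^ 2 := by
    rw [← sin_sq_add_cos_sq (2 * θ)]; ring
  have hr_pow : r ^ (-2 : ℝ) * r ^ (α - 2) = r ^ (α - 4) := by rw [← rpow_add hr]; ring_nf
  have hs_pow :
      sin (2 * θ) ^ ((α - 1) / 2) = sin (2 * θ) ^ ((α - 1) / 2 - 2) * sin (2 * θ) ^ 2 := by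
    rw [← rpow_natCast, ← rpow_add hs]; ring_nf
  rw [neg_mul, radial, mul_assoc (r ^ (-2 : ℝ)), angular, hcos, hs_pow,
    show α - 2 - 2 = α - 4 by ring, ← hr_pow]
  ring

/-- For `α ≠ 1`, `u(r,θ) = r^{α-2} (sin 2θ)^{(α-1)/2}` is a supersolution on
`r > 0`, `0 < θ < π/2` of
`−r^{2α-5} ∂_r(r^{5-2α} ∂_r u) − r^{-2}(sin 2θ)^{α-2} ∂_θ((sin 2θ)^{2-α} ∂_θ u)
  ≥ C r^{-2}(sin 2θ)^{-1} u`, with `C` a positive constant multiple of `(α-1)²`. -/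
theorem biradial_supersolution (α : ℝ) (hα : α ≠ 1)
    (u : ℝ → ℝ → ℝ) (hu : u = fun r θ => r ^ (α - 2) * Real.sin (2 * θ) ^ ((α - 1) / 2)) :
    ∃ C > (0 : ℝ), (∃ c > (0 : ℝ), C = c * (α - 1) ^ 2) ∧
      ∀ r : ℝ, 0 < r → ∀ θ : ℝ, θ ∈ Set.Ioo 0 (π / 2) →
        -(r ^ (2 * α - 5)) * deriv (fun s => s ^ (5 - 2 * α) * deriv (fun s' => u s' θ) s) r
          - r ^ (-2 : ℝ) * Real.sin (2 * θ) ^ (α - 2) *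
            deriv (fun t => Real.sin (2 * t) ^ (2 - α) * deriv (fun t' => u r t') t) θ
        ≥ C * r ^ (-2 : ℝ) * Real.sin (2 * θ) ^ (-1 : ℝ) * u r θ := by
  have hα1 : α - 1 ≠ 0 := sub_ne_zero.mpr hα
  refine ⟨(α - 1) ^ 2, by positivity, ⟨1, one_pos, (one_mul _).symm⟩, fun r hr θ hθ => ?_⟩
  subst hu
  have hs : 0 < sin (2 * θ) := sin_pos_of_pos_of_lt_pi (by linarith [hθ.1]) (by linarith [hθ.2])
  have hs_le : sin (2 * θ) ≤ 1 := sin_le_one _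
  rw [biradial_operator_eq α hr hs, ge_iff_le]
  set s := sin (2 * θ)
  have hr_pow : r ^ (-2 : ℝ) * r ^ (α - 2) = r ^ (α - 4) := by rw [← rpow_add hr]; ring_nf
  have hs_pow : s ^ (-1 : ℝ) * s ^ ((α - 1) / 2) = s ^ ((α - 1) / 2 - 2) * s := by
    rw [← rpow_add hs, ← rpow_add_one hs.ne']; ring_nf
  have hrhs : (α - 1) ^ 2 * r ^ (-2 : ℝ) * s ^ (-1 : ℝ) * (r ^ (α - 2) * s ^ ((α - 1) / 2))
      = (α - 1) ^ 2 * r ^ (α - 4) * (s ^ ((α - 1) / 2 - 2) * s) := by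
    rw [← hr_pow, ← hs_pow]; ring
  have hgap : 0 ≤ r ^ (α - 4) * s ^ ((α - 1) / 2 - 2) * ((α - 1) ^ 2 * (1 - s) + s ^ 2) := by
    have := sub_nonneg.2 hs_le
    positivity
  rw [hrhs]
  linear_combination hgap
end

section
/- For α = 1, the function u(r,θ) = r^{-1} √(log(1/ sin 2θ)) satisfies, for some constant C > 0 and all r > 0, 0 < θ < π/2 with sin 2θ < 1, the inequality −r^{-3} ∂_r(r³ ∂_r u) − r^{-2} (sin 2θ)^{-1} ∂_θ((sin 2θ) ∂_θ u) ≥ C r^{-2} (sin 2θ)^{-1} u. -/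
/-!
Since `u = r⁻¹ g(θ)` with `g = √(-log sin 2θ)`, the radial part of the operator contributes
`r⁻³ g` and the angular part `r⁻³ (c² / (s² g³) - 2 / g)`, where `s = sin 2θ`, `c = cos 2θ`.
Multiplying by `s² g³`, the inequality with `C = 1` becomes
`s log² s ≤ 1 - s² + 2 s² log s + s² log² s` for `0 < s < 1`, which splits into
`s log² s ≤ (1 - s)²` (that is, `|x| ≤ |sinh x|` at `x = log s / 2`) and `-s log s ≤ 1 - s`.
-/

open Real Filter Topology

lemma sq_le_sinh_sq (x : ℝ) : x ^ 2 ≤ sinh x ^ 2 := by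
  rcases le_total 0 x with hx | hx
  · exact pow_le_pow_left₀ hx (self_le_sinh_iff.2 hx) 2
  · have h := self_le_sinh_iff.2 (neg_nonneg.2 hx)
    rw [sinh_neg] at h
    nlinarith

lemma sq_mul_exp_le_sq_exp_sub_one (x : ℝ) : x ^ 2 * exp x ≤ (exp x - 1) ^ 2 := by
  have hx : exp x = exp (x / 2) ^ 2 := by rw [← exp_nat_mul]; ring_nf
  have hsub : exp x - 1 = 2 * sinh (x / 2) * exp (x / 2) := by
    rw [sinh_eq, hx, exp_neg]; field_simp
  calc x ^ 2 * exp x = 4 * (x / 2) ^ 2 * exp (x / 2) ^ 2 := by rw [hx]; ring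
    _ ≤ 4 * sinh (x / 2) ^ 2 * exp (x / 2) ^ 2 := by
      have := sq_le_sinh_sq (x / 2)
      gcongr
    _ = (exp x - 1) ^ 2 := by rw [hsub]; ring

lemma mul_log_sq_le_sq_sub_one {s : ℝ} (hs : 0 < s) : s * log s ^ 2 ≤ (s - 1) ^ 2 := by
  simpa [exp_log hs, mul_comm] using sq_mul_exp_le_sq_exp_sub_one (log s)

lemma mul_log_sq_le {s : ℝ} (hs : 0 < s) :
    s * log s ^ 2 ≤ 1 - s ^ 2 + 2 * s ^ 2 * log s + s ^ 2 * log s ^ 2 := by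
  have hsq := mul_log_sq_le_sq_sub_one hs
  have hlog : -log s ≤ s⁻¹ - 1 := by
    rw [← log_inv]; exact log_le_sub_one_of_pos (inv_pos.2 hs)
  have hmul : s * -log s ≤ 1 - s := by
    have := mul_le_mul_of_nonneg_left hlog hs.le
    rwa [mul_sub, mul_inv_cancel₀ hs.ne', mul_one] at this
  nlinarith [sq_nonneg (s * log s)]

lemma div_le_sub_inv_mul {s c g : ℝ} (hs : 0 < s) (hg : 0 < g) (hgs : g ^ 2 = -log s)
    (hsc : s ^ 2 + c ^ 2 = 1) :
    g / s ≤ g - s⁻¹ * (2 * s / g - c ^ 2 / (s * g ^ 3)) := by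
  have hkey := mul_log_sq_le hs
  have hexpand : g - s⁻¹ * (2 * s / g - c ^ 2 / (s * g ^ 3)) - g / s
      = (1 - s ^ 2 + 2 * s ^ 2 * log s + s ^ 2 * log s ^ 2 - s * log s ^ 2)
        / (s ^ 2 * g ^ 3) := by
    have hc : c ^ 2 = 1 - s ^ 2 := by linarith
    have hlog : log s = -g ^ 2 := by linarith
    rw [hc, hlog]
    field_simp
    ring
  rw [← sub_nonneg, hexpand]
  exact div_nonneg (by linarith) (by positivity)

lemma deriv_pow_three_mul_deriv_inv_mul (a r : ℝ) :
    deriv (fun x => x ^ 3 * deriv (fun y => y⁻¹ * a) x) r = -a := by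
  have hfun : (fun x => x ^ 3 * deriv (fun y => y⁻¹ * a) x) = fun x => -a * x := by
    funext x
    rw [deriv_mul_const_field, deriv_inv]
    rcases eq_or_ne x 0 with rfl | hx
    · simp
    · field_simp
  rw [hfun, deriv_const_mul_field, deriv_id'', mul_one]

noncomputable def angularProfile (t : ℝ) : ℝ := √(log (1 / sin (2 * t)))

lemma angularProfile_pos {t : ℝ} (h0 : 0 < sin (2 * t)) (h1 : sin (2 * t) < 1) :
    0 < angularProfile t := by
  rw [angularProfile, sqrt_pos, one_div, log_inv, neg_pos]
  exact log_neg h0 h1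

lemma sq_angularProfile {t : ℝ} (h0 : 0 < sin (2 * t)) (h1 : sin (2 * t) < 1) :
    angularProfile t ^ 2 = -log (sin (2 * t)) := by
  rw [angularProfile, one_div, log_inv, sq_sqrt (neg_nonneg.2 (log_neg h0 h1).le)]

lemma hasDerivAt_angularProfile {t : ℝ} (h0 : 0 < sin (2 * t)) (h1 : sin (2 * t) < 1) :
    HasDerivAt angularProfile (-cos (2 * t) / (sin (2 * t) * angularProfile t)) t := by
  have hsin : HasDerivAt (fun x => sin (2 * x)) (cos (2 * t) * 2) t := by
    simpa using ((hasDerivAt_id t).const_mul 2).sin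
  have hlog : HasDerivAt (fun x => log (1 / sin (2 * x)))
      (-(cos (2 * t) * 2 / sin (2 * t))) t := by
    simp only [one_div, log_inv]
    exact (hsin.log h0.ne').neg
  have hg := angularProfile_pos h0 h1
  unfold angularProfile at hg ⊢
  convert hlog.sqrt (sqrt_pos.1 hg).ne' using 1
  field_simp

lemma sin_mul_deriv_angularProfile {t : ℝ} (h0 : 0 < sin (2 * t)) (h1 : sin (2 * t) < 1) :
    sin (2 * t) * deriv angularProfile t = -cos (2 * t) / angularProfile t := by
  rw [(hasDerivAt_angularProfile h0 h1).deriv]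
  field_simp

lemma deriv_sin_mul_deriv_angularProfile {θ : ℝ} (h0 : 0 < sin (2 * θ)) (h1 : sin (2 * θ) < 1) :
    deriv (fun t => sin (2 * t) * deriv angularProfile t) θ
      = 2 * sin (2 * θ) / angularProfile θ
        - cos (2 * θ) ^ 2 / (sin (2 * θ) * angularProfile θ ^ 3) := by
  have hnhds : ∀ᶠ t in 𝓝 θ, sin (2 * t) ∈ Set.Ioo 0 1 :=
    (continuous_sin.comp (continuous_const_mul 2)).continuousAt.eventually_mem
      (isOpen_Ioo.mem_nhds ⟨h0, h1⟩)
  have hflux : (fun t => sin (2 * t) * deriv angularProfile t)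
      =ᶠ[𝓝 θ] fun t => -cos (2 * t) / angularProfile t := by
    filter_upwards [hnhds] with t ht
    exact sin_mul_deriv_angularProfile ht.1 ht.2
  have hcos : HasDerivAt (fun t => -cos (2 * t)) (sin (2 * θ) * 2) θ := by
    simpa using ((hasDerivAt_id θ).const_mul 2).cos.fun_neg
  have hg := angularProfile_pos h0 h1
  rw [hflux.deriv_eq, (hcos.fun_div (hasDerivAt_angularProfile h0 h1) hg.ne').deriv]
  field_simp

lemma deriv_sin_mul_deriv_const_mul_angularProfile (a : ℝ) {θ : ℝ} (h0 : 0 < sin (2 * θ))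
    (h1 : sin (2 * θ) < 1) :
    deriv (fun t => sin (2 * t) * deriv (fun t' => a * angularProfile t') t) θ
      = a * (2 * sin (2 * θ) / angularProfile θ
        - cos (2 * θ) ^ 2 / (sin (2 * θ) * angularProfile θ ^ 3)) := by
  simp_rw [deriv_const_mul_field, mul_left_comm (sin _) a]
  rw [deriv_const_mul_field, deriv_sin_mul_deriv_angularProfile h0 h1]

/-- The `α = 1` supersolution with logarithmic angular correction:
`u(r,θ) = r^{-1} √(log(1/sin 2θ))` satisfies, for some `C > 0` and all `r > 0`,
`0 < θ < π/2` with `sin 2θ < 1`,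
`−r^{-3} ∂_r(r³ ∂_r u) − r^{-2}(sin 2θ)^{-1} ∂_θ((sin 2θ) ∂_θ u)
  ≥ C r^{-2}(sin 2θ)^{-1} u`. -/
theorem biradial_supersolution_log
    (u : ℝ → ℝ → ℝ)
    (hu : u = fun r θ => r⁻¹ * Real.sqrt (Real.log (1 / Real.sin (2 * θ)))) :
    ∃ C > (0 : ℝ),
      ∀ r : ℝ, 0 < r → ∀ θ : ℝ, θ ∈ Set.Ioo 0 (π / 2) → Real.sin (2 * θ) < 1 →
        -(r ^ (-3 : ℝ)) * deriv (fun s => s ^ (3 : ℕ) * deriv (fun s' => u s' θ) s) r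
          - r ^ (-2 : ℝ) * (Real.sin (2 * θ))⁻¹ *
            deriv (fun t => Real.sin (2 * t) * deriv (fun t' => u r t') t) θ
        ≥ C * r ^ (-2 : ℝ) * (Real.sin (2 * θ))⁻¹ * u r θ := by
  refine ⟨1, one_pos, fun r hr θ ⟨hθ0, hθ1⟩ h1 => ?_⟩
  have h0 : 0 < sin (2 * θ) := sin_pos_of_pos_of_lt_pi (by linarith) (by linarith)
  have hu' : u = fun r θ => r⁻¹ * angularProfile θ := hu
  have hr3 : r ^ (-3 : ℝ) = r ^ (-2 : ℝ) * r⁻¹ := by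
    rw [show (-3 : ℝ) = -2 + -1 by norm_num, rpow_add hr, rpow_neg_one]
  have hbound := div_le_sub_inv_mul h0 (angularProfile_pos h0 h1) (sq_angularProfile h0 h1)
    (sin_sq_add_cos_sq (2 * θ))
  have hscale : 0 ≤ r ^ (-2 : ℝ) * r⁻¹ := by positivity
  simp only [hu', deriv_pow_three_mul_deriv_inv_mul,
    deriv_sin_mul_deriv_const_mul_angularProfile _ h0 h1, hr3]
  linear_combination mul_le_mul_of_nonneg_left hbound hscale
end

section
/- There exists C(γ) > 0 (with γ = (γ₁,…,γ_m), m ≥ 2, N = |γ| > m) such that for every Lipschitz block-radial function u on ℝ^N vanishing on the set {r₁⋯r_m = 0}, sup_{x} |u(x)| / r_γ(x) ≤ C(γ) ‖∇u‖_∞, where r_γ(x) = ∏_i r_i(x)^{(γ_i−1)/(N−m)}. -/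
/-!
Since the exponents `αᵢ = (γᵢ - 1)/(N - m)` are nonnegative and sum to `1`, `r_γ(x)` dominates the
smallest block radius `rᵢ(x)`, so `C = 1` works. Erasing the `i`-th block of `x` gives a point `y`
with `u y = 0` at distance `rᵢ(x)` from `x`, and a Lipschitz `u` on a finite-dimensional space
satisfies `|u x - u y| ≤ (sup ‖Du‖) ‖x - y‖`: by Rademacher and Fubini, `u` is differentiable at
almost every point of almost every segment parallel to `x - y`, the fundamental theorem of calculus
for absolutely continuous functions bounds the increment along those segments, and continuity
extends the bound to all of them.
-/

open Real MeasureTheory Finset Filter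

/-- Euclidean norm of the `i`-th block of coordinates of `x ∈ ℝ^{γ₁+⋯+γ_m}`. -/
noncomputable def blockNorm {m : ℕ} (γ : Fin m → ℕ) (i : Fin m)
    (x : EuclideanSpace ℝ (Fin (∑ j, γ j))) : ℝ :=
  Real.sqrt (∑ k : Fin (∑ j, γ j),
    if (∑ j ∈ Finset.univ.filter (fun j => j < i), γ j) ≤ (k : ℕ) ∧
       (k : ℕ) < (∑ j ∈ Finset.univ.filter (fun j => j ≤ i), γ j)
    then x k ^ 2 else 0)

/-- The block-radial weight `r_γ(x) = ∏ᵢ rᵢ(x)^{(γᵢ-1)/(N-m)}`. -/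
noncomputable def rGamma {m : ℕ} (γ : Fin m → ℕ)
    (x : EuclideanSpace ℝ (Fin (∑ j, γ j))) : ℝ :=
  ∏ i, blockNorm γ i x ^ (((γ i : ℝ) - 1) / ((∑ j, γ j : ℕ) - (m : ℝ)))

/-- `u` vanishes in a neighborhood of `Y(γ) = ⋃_{i : γᵢ ≥ 2} {rᵢ = 0}`. -/
def VanishesNearY {m : ℕ} (γ : Fin m → ℕ)
    (u : EuclideanSpace ℝ (Fin (∑ j, γ j)) → ℝ) : Prop :=
  ∃ U : Set (EuclideanSpace ℝ (Fin (∑ j, γ j))), IsOpen U ∧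
    {x | ∃ i, 2 ≤ γ i ∧ blockNorm γ i x = 0} ⊆ U ∧ ∀ x ∈ U, u x = 0

open scoped NNReal

theorem LipschitzWith.abs_sub_le_of_ae_abs_deriv_le {g : ℝ → ℝ} {K : ℝ≥0}
    (hg : LipschitzWith K g) {c : ℝ} (hc : ∀ᵐ t, |deriv g t| ≤ c) (a b : ℝ) :
    |g b - g a| ≤ c * |b - a| := by
  have hac := (hg.lipschitzOnWith (s := Set.uIcc a b)).absolutelyContinuousOnInterval
  rw [← hac.integral_deriv_eq_sub]
  exact intervalIntegral.norm_integral_le_of_norm_le_const_ae (C := c)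
    (hc.mono fun t ht _ => by rwa [Real.norm_eq_abs])

theorem MeasureTheory.Measure.ae_ae_add_smul_of_ae {E : Type*} [NormedAddCommGroup E]
    [NormedSpace ℝ E] [MeasurableSpace E] [BorelSpace E] [SecondCountableTopology E]
    {μ : Measure E} [μ.IsAddRightInvariant] [SFinite μ] {p : E → Prop} (h : ∀ᵐ z ∂μ, p z) (v : E) :
    ∀ᵐ z ∂μ, ∀ᵐ t : ℝ, p (z + t • v) := by
  set N := toMeasurable μ {z | ¬ p z}
  have hN : μ N = 0 := by rw [measure_toMeasurable]; exact h
  set A : Set (E × ℝ) := {q | q.1 + q.2 • v ∈ N}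
  have hA : MeasurableSet A :=
    (measurable_fst.add (measurable_snd.smul_const v)) (measurableSet_toMeasurable μ _)
  have hA0 : μ.prod volume A = 0 := by
    rw [Measure.prod_apply_symm hA]
    refine (lintegral_congr fun t => ?_).trans lintegral_zero
    exact (measure_preimage_add_right μ (t • v) N).trans hN
  have hAc : ∀ᵐ q ∂μ.prod volume, q ∉ A := measure_eq_zero_iff_ae_notMem.1 hA0
  filter_upwards [Measure.ae_ae_of_ae_prod hAc] with z hz
  filter_upwards [hz] with t ht
  by_contra hp
  exact ht (subset_toMeasurable μ _ hp)

theorem LipschitzWith.bddAbove_range_norm_fderiv {E F : Type*} [NormedAddCommGroup E]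
    [NormedSpace ℝ E] [NormedAddCommGroup F] [NormedSpace ℝ F] {u : E → F} {K : ℝ≥0}
    (hu : LipschitzWith K u) : BddAbove (Set.range fun z => ‖fderiv ℝ u z‖) :=
  ⟨K, Set.forall_mem_range.2 fun _ => norm_fderiv_le_of_lipschitz ℝ hu⟩

theorem LipschitzWith.abs_sub_le_iSup_norm_fderiv_mul {E : Type*} [NormedAddCommGroup E]
    [NormedSpace ℝ E] [FiniteDimensional ℝ E] {u : E → ℝ} {K : ℝ≥0} (hu : LipschitzWith K u)
    (x y : E) : |u x - u y| ≤ (⨆ z, ‖fderiv ℝ u z‖) * ‖x - y‖ := by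
  set M := ⨆ z, ‖fderiv ℝ u z‖
  suffices h : ∀ v z, |u (z + v) - u z| ≤ M * ‖v‖ by simpa using h (x - y) y
  intro v
  borelize E
  have hline : ∀ z, LipschitzWith (K * ‖v‖₊) fun t : ℝ => u (z + t • v) := fun z =>
    hu.comp <| LipschitzWith.of_dist_le_mul fun s t => by
      simp [dist_eq_norm, ← sub_smul, norm_smul, mul_comm]
  have hae : ∀ᵐ z ∂(Measure.addHaar : Measure E), |u (z + v) - u z| ≤ M * ‖v‖ := by
    filter_upwards [Measure.ae_ae_add_smul_of_ae hu.ae_differentiableAt v] with z hz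
    have hbound : ∀ᵐ t : ℝ, |deriv (fun t : ℝ => u (z + t • v)) t| ≤ M * ‖v‖ := by
      filter_upwards [hz] with t ht
      have hderiv :
          HasDerivAt (fun t : ℝ => u (z + t • v)) (fderiv ℝ u (z + t • v) v) t := by
        refine ht.hasFDerivAt.comp_hasDerivAt t ?_
        simpa using ((hasDerivAt_id t).smul_const v).const_add z
      rw [hderiv.deriv]
      calc |fderiv ℝ u (z + t • v) v| ≤ ‖fderiv ℝ u (z + t • v)‖ * ‖v‖ :=
            (fderiv ℝ u (z + t • v)).le_opNorm v
        _ ≤ M * ‖v‖ := by gcongr; exact le_ciSup hu.bddAbove_range_norm_fderiv _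
    simpa using (hline z).abs_sub_le_of_ae_abs_deriv_le hbound 0 1
  have hclosed : IsClosed {z | |u (z + v) - u z| ≤ M * ‖v‖} := by
    have := hu.continuous
    exact isClosed_le (by fun_prop) continuous_const
  have huniv := (Measure.dense_of_ae hae).closure_eq
  rw [hclosed.closure_eq] at huniv
  exact Set.eq_univ_iff_forall.1 huniv

theorem Real.le_prod_rpow_of_le {ι : Type*} {s : Finset ι} {a : ℝ} {z w : ι → ℝ} (ha : 0 ≤ a)
    (haz : ∀ i ∈ s, a ≤ z i) (hw : ∀ i ∈ s, 0 ≤ w i) (hw1 : ∑ i ∈ s, w i = 1) :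
    a ≤ ∏ i ∈ s, z i ^ w i :=
  calc a = a ^ ∑ i ∈ s, w i := by rw [hw1, rpow_one]
    _ = ∏ i ∈ s, a ^ w i := rpow_sum_of_nonneg ha hw
    _ ≤ ∏ i ∈ s, z i ^ w i :=
      prod_le_prod (fun i _ => rpow_nonneg ha _) fun i hi => rpow_le_rpow ha (haz i hi) (hw i hi)

section BlockRadial

variable {m : ℕ} (γ : Fin m → ℕ)

noncomputable def eraseBlock (i : Fin m) (x : EuclideanSpace ℝ (Fin (∑ j, γ j))) :
    EuclideanSpace ℝ (Fin (∑ j, γ j)) :=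
  WithLp.toLp 2 fun k =>
    if (∑ j ∈ Finset.univ.filter (fun j => j < i), γ j) ≤ (k : ℕ) ∧
       (k : ℕ) < (∑ j ∈ Finset.univ.filter (fun j => j ≤ i), γ j)
    then 0 else x k

variable {γ}

theorem blockNorm_nonneg (i : Fin m) (x : EuclideanSpace ℝ (Fin (∑ j, γ j))) :
    0 ≤ blockNorm γ i x :=
  sqrt_nonneg _

theorem blockNorm_eraseBlock_self (i : Fin m) (x : EuclideanSpace ℝ (Fin (∑ j, γ j))) :
    blockNorm γ i (eraseBlock γ i x) = 0 := by
  rw [blockNorm, sum_eq_zero, sqrt_zero]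
  intro k _
  split_ifs with hk <;> simp [eraseBlock, hk]

theorem norm_sub_eraseBlock (i : Fin m) (x : EuclideanSpace ℝ (Fin (∑ j, γ j))) :
    ‖x - eraseBlock γ i x‖ = blockNorm γ i x := by
  rw [EuclideanSpace.norm_eq, blockNorm]
  congr 1
  refine sum_congr rfl fun k _ => ?_
  split_ifs with hk <;> simp [eraseBlock, hk]

theorem sum_rGamma_exponent (hN : m < ∑ j, γ j) :
    ∑ i, ((γ i : ℝ) - 1) / ((∑ j, γ j : ℕ) - (m : ℝ)) = 1 := by
  have hpos : (0 : ℝ) < (∑ j, γ j : ℕ) - m := sub_pos.2 (by exact_mod_cast hN)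
  rw [← sum_div, div_eq_one_iff_eq hpos.ne', sum_sub_distrib]
  simp

theorem blockNorm_le_rGamma (hγ : ∀ i, 1 ≤ γ i) (hN : m < ∑ j, γ j) {i : Fin m}
    {x : EuclideanSpace ℝ (Fin (∑ j, γ j))} (hi : ∀ j, blockNorm γ i x ≤ blockNorm γ j x) :
    blockNorm γ i x ≤ rGamma γ x := by
  refine le_prod_rpow_of_le (blockNorm_nonneg i x) (fun j _ => hi j) (fun j _ => ?_)
    (sum_rGamma_exponent hN)
  have : (1 : ℝ) ≤ γ j := by exact_mod_cast hγ j
  have : (m : ℝ) < (∑ j, γ j : ℕ) := by exact_mod_cast hN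
  exact div_nonneg (by linarith) (by linarith)

end BlockRadial

theorem blockRadial_hardy_infty_general (m : ℕ) (γ : Fin m → ℕ)
    (hγpos : ∀ i, 1 ≤ γ i) (hN : m < ∑ j, γ j) :
    ∃ C > 0, ∀ u : EuclideanSpace ℝ (Fin (∑ j, γ j)) → ℝ,
      (∃ K, LipschitzWith K u) →
      (∀ x y, (∀ i, blockNorm γ i x = blockNorm γ i y) → u x = u y) →
      (∀ x, (∃ i, blockNorm γ i x = 0) → u x = 0) →
      ∀ x, |u x| ≤ C * rGamma γ x * ⨆ y, ‖fderiv ℝ u y‖ := by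
  refine ⟨1, one_pos, ?_⟩
  rintro u ⟨K, hK⟩ - hvan x
  obtain ⟨i, -, hi⟩ := exists_min_image univ (blockNorm γ · x)
    (nonempty_of_sum_ne_zero (f := γ) (by omega))
  have hM : 0 ≤ ⨆ y, ‖fderiv ℝ u y‖ := Real.iSup_nonneg fun y => norm_nonneg _
  calc |u x| = |u x - u (eraseBlock γ i x)| := by
        rw [hvan _ ⟨i, blockNorm_eraseBlock_self i x⟩, sub_zero]
    _ ≤ (⨆ y, ‖fderiv ℝ u y‖) * blockNorm γ i x := by
        simpa only [norm_sub_eraseBlock] using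
          hK.abs_sub_le_iSup_norm_fderiv_mul x (eraseBlock γ i x)
    _ ≤ (⨆ y, ‖fderiv ℝ u y‖) * rGamma γ x := by
        gcongr
        exact blockNorm_le_rGamma hγpos hN fun j => hi j (mem_univ j)
    _ = 1 * rGamma γ x * ⨆ y, ‖fderiv ℝ u y‖ := by ring

/-- The `q = ∞` endpoint of the block-radial Hardy inequality (Corollary 2.3):
for Lipschitz block-radial `u` vanishing on `{r₁⋯r_m = 0}`,
`|u(x)| ≤ C(γ) · r_γ(x) · ‖∇u‖_∞`. -/
theorem blockRadial_hardy_infty (m : ℕ) (hm : 2 ≤ m) (γ : Fin m → ℕ)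
    (hγpos : ∀ i, 1 ≤ γ i) (hN : m < ∑ j, γ j) :
    ∃ C > 0, ∀ u : EuclideanSpace ℝ (Fin (∑ j, γ j)) → ℝ,
      (∃ K, LipschitzWith K u) →
      (∀ x y, (∀ i, blockNorm γ i x = blockNorm γ i y) → u x = u y) →
      (∀ x, (∃ i, blockNorm γ i x = 0) → u x = 0) →
      ∀ x, |u x| ≤ C * rGamma γ x * ⨆ y, ‖fderiv ℝ u y‖ :=
  blockRadial_hardy_infty_general m γ hγpos hN
end

section
/- Let m ≥ 2, γ ∈ ℕ^m with γ_i ≥ 2 for all i, and N = |γ|. For any sequence (y_k) ⊂ ℝ^N with |y_k| → ∞, there exist, after passing to a subsequence, group elements ω_k^{(1)},…,ω_k^{(k)} ∈ O(γ₁)×⋯×O(γ_m) such that |ω_k^{(i)} y_k − ω_k^{(j)} y_k| → ∞ as k → ∞ whenever i ≠ j. -/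
/-!
Fix unit vectors `v₀, v₁, …` of the plane, pairwise distinct, and embed the plane isometrically
into every block `ℝ^{γᵢ}` (possible since `γᵢ ≥ 2`). In each block a reflection moves `y_k^{(i)}`
to `|y_k^{(i)}|` times the image of `vₙ`; doing this in all blocks gives `ω_k^{(n)}` with
`|ω_k^{(n)} y_k − ω_k^{(n')} y_k| = |vₙ − v_{n'}| |y_k|`, which tends to infinity without passing
to a subsequence.
-/

open Filter

/-- The Euclidean norm of a point of `ℝ^{γ₁} × ⋯ × ℝ^{γ_m}`. -/
noncomputable def piNorm {m : ℕ} {γ : Fin m → ℕ}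
    (x : ∀ i : Fin m, EuclideanSpace ℝ (Fin (γ i))) : ℝ :=
  Real.sqrt (∑ i, ‖x i‖ ^ 2)

section

variable {E : Type*} [NormedAddCommGroup E] [InnerProductSpace ℝ E]

theorem exists_linearIsometryEquiv_apply_eq_norm_smul (x : E) {u : E} (hu : ‖u‖ = 1) :
    ∃ ω : E ≃ₗᵢ[ℝ] E, ω x = ‖x‖ • u :=
  ⟨(ℝ ∙ (x - ‖x‖ • u))ᗮ.reflection, Submodule.reflection_sub (by simp [norm_smul, hu])⟩

theorem exists_injective_forall_norm_eq_one (h : 1 < Module.rank ℝ E) :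
    ∃ v : ℕ → E, Function.Injective v ∧ ∀ n, ‖v n‖ = 1 := by
  have : Nontrivial E := rank_pos_iff_nontrivial.mp (zero_lt_one.trans h)
  obtain ⟨u, hu⟩ := NormedSpace.sphere_nonempty_rclike (E := E) (𝕜 := ℝ) zero_le_one
  have hu' : -u ∈ Metric.sphere (0 : E) 1 := by simpa using hu
  have hne : u ≠ -u := by
    intro h'
    have h2 : (2 : ℝ) • u = 0 := by rw [two_smul]; nth_rw 2 [h']; exact add_neg_cancel u
    simp [(smul_eq_zero.mp h2).resolve_left two_ne_zero] at hu
  have hinf : (Metric.sphere (0 : E) 1).Infinite :=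
    (isConnected_sphere h 0 zero_le_one).isPreconnected.infinite_of_nontrivial ⟨u, hu, -u, hu', hne⟩
  exact ⟨fun n => hinf.natEmbedding _ n, Subtype.val_injective.comp (hinf.natEmbedding _).injective,
    fun n => mem_sphere_zero_iff_norm.mp (hinf.natEmbedding _ n).2⟩

end

noncomputable def EuclideanSpace.castLELinearIsometry {d d' : ℕ} (h : d ≤ d') :
    EuclideanSpace ℝ (Fin d) →ₗᵢ[ℝ] EuclideanSpace ℝ (Fin d') :=
  let b := (EuclideanSpace.basisFun (Fin d) ℝ).toBasis
  let f := b.constr ℝ fun j => EuclideanSpace.basisFun (Fin d') ℝ (Fin.castLE h j)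
  f.isometryOfOrthonormal (v := b) (by simp [b, (EuclideanSpace.basisFun (Fin d) ℝ).orthonormal])
    (by
      have hf : ⇑f ∘ ⇑b = ⇑(EuclideanSpace.basisFun (Fin d') ℝ) ∘ Fin.castLE h := by
        ext j : 1
        simp [f]
      rw [hf]
      exact (EuclideanSpace.basisFun (Fin d') ℝ).orthonormal.comp _ (Fin.castLE_injective h))

theorem piNorm_norm_smul {m : ℕ} {γ : Fin m → ℕ} (x z : ∀ i : Fin m, EuclideanSpace ℝ (Fin (γ i)))
    {c : ℝ} (hc : 0 ≤ c) (hz : ∀ i, ‖z i‖ = c) :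
    piNorm (fun i => ‖x i‖ • z i) = c * piNorm x := by
  have hsq : ∀ i, ‖‖x i‖ • z i‖ ^ 2 = c ^ 2 * ‖x i‖ ^ 2 := fun i => by
    rw [norm_smul, norm_norm, hz, mul_pow, mul_comm]
  rw [piNorm, piNorm, Finset.sum_congr rfl fun i _ => hsq i, ← Finset.mul_sum,
    Real.sqrt_mul (sq_nonneg c), Real.sqrt_sq hc]

theorem block_rotation_separation_general (m : ℕ) (γ : Fin m → ℕ)
    (hγ : ∀ i, 2 ≤ γ i)
    (y : ℕ → ∀ i : Fin m, EuclideanSpace ℝ (Fin (γ i)))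
    (hy : Tendsto (fun k => piNorm (y k)) atTop atTop) :
    ∃ φ : ℕ → ℕ, StrictMono φ ∧
      ∃ ω : ℕ → ℕ → ∀ i : Fin m, EuclideanSpace ℝ (Fin (γ i)) ≃ₗᵢ[ℝ] EuclideanSpace ℝ (Fin (γ i)),
        ∀ n n' : ℕ, n ≠ n' →
          Tendsto (fun k =>
              piNorm (fun i => ω k n i (y (φ k) i) - ω k n' i (y (φ k) i)))
            atTop atTop := by
  obtain ⟨v, hv_inj, hv_norm⟩ := exists_injective_forall_norm_eq_one (E := EuclideanSpace ℝ (Fin 2))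
    (by rw [← Module.finrank_eq_rank, finrank_euclideanSpace_fin]; norm_num)
  let ι i := EuclideanSpace.castLELinearIsometry (hγ i)
  choose ω hω using fun k n i =>
    exists_linearIsometryEquiv_apply_eq_norm_smul (y k i) (((ι i).norm_map (v n)).trans (hv_norm n))
  refine ⟨id, strictMono_id, ω, fun n n' hnn' => ?_⟩
  have hsep : ∀ k, piNorm (fun i => ω k n i (y k i) - ω k n' i (y k i))
      = ‖v n - v n'‖ * piNorm (y k) := fun k => by
    simp_rw [hω, ← smul_sub, ← map_sub]
    exact piNorm_norm_smul _ _ (norm_nonneg _) fun i => (ι i).norm_map _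
  simp only [id, hsep]
  exact hy.const_mul_atTop (norm_pos_iff.mpr (sub_ne_zero.mpr (hv_inj.ne hnn')))

/-- Lemma 4.3 (coercivity of the block-rotation group): if all `γᵢ ≥ 2` and
`|y_k| → ∞`, then after passing to a subsequence there are block isometries
`ω_k^{(n)} ∈ O(γ₁) × ⋯ × O(γ_m)` with `|ω_k^{(n)} y_k − ω_k^{(n')} y_k| → ∞`
whenever `n ≠ n'`. -/
theorem block_rotation_separation (m : ℕ) (hm : 2 ≤ m) (γ : Fin m → ℕ)
    (hγ : ∀ i, 2 ≤ γ i)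
    (y : ℕ → ∀ i : Fin m, EuclideanSpace ℝ (Fin (γ i)))
    (hy : Tendsto (fun k => piNorm (y k)) atTop atTop) :
    ∃ φ : ℕ → ℕ, StrictMono φ ∧
      ∃ ω : ℕ → ℕ → ∀ i : Fin m, EuclideanSpace ℝ (Fin (γ i)) ≃ₗᵢ[ℝ] EuclideanSpace ℝ (Fin (γ i)),
        ∀ n n' : ℕ, n ≠ n' →
          Tendsto (fun k =>
              piNorm (fun i => ω k n i (y (φ k) i) - ω k n' i (y (φ k) i)))
            atTop atTop :=
  block_rotation_separation_general m γ hγ y hy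
end
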